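/- For every odd integer d ≥ 3, let φ_d : ℂ³ → ℂ³ be given by φ_d(x, y, z) = (I·(x − y)^d, (x + y)^d, z^d), and let φ̄_d(x, y, z) = (−I·(x − y)^d, (x + y)^d, z^d) (the map obtained by applying complex conjugation to the coefficients). Then there exists F ∈ GL₃(ℂ) such that for every v ∈ ℂ³ with v ≠ 0 there exists c ∈ ℂ with c ≠ 0 such that φ̄_d(v) = c • (F⁻¹·φ_d(F·v)). (That is, for every odd d the field of moduli of φ_d is ℚ.) -/

import Mathlib

/-!
The quarter turn `F : (x, y, z) ↦ (-c y, c x, z)` replaces `x - y` by `-c (x + y)` and `x + y`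
by `c (x - y)`. As `d` is odd, `F⁻¹ ∘ phiD d ∘ F` is therefore
`(c⁻¹ c ^ d (x - y) ^ d, I c⁻¹ c ^ d (x + y) ^ d, z ^ d)`, which is `phiDBar d` as soon as
`c ^ (d - 1) = -I`; such a `c` exists because `d ≥ 2`. So the conjugacy holds on `ℂ³` itself.
-/

open Matrix

noncomputable def phiD (d : ℕ) (v : Fin 3 → ℂ) : Fin 3 → ℂ :=
  ![Complex.I * (v 0 - v 1) ^ d, (v 0 + v 1) ^ d, (v 2) ^ d]

noncomputable def phiDBar (d : ℕ) (v : Fin 3 → ℂ) : Fin 3 → ℂ :=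
  ![-Complex.I * (v 0 - v 1) ^ d, (v 0 + v 1) ^ d, (v 2) ^ d]

section QuarterTurn

variable {R : Type*} [CommRing R]

def quarterTurn (c : R) : Matrix (Fin 3) (Fin 3) R := !![0, -c, 0; c, 0, 0; 0, 0, 1]

theorem quarterTurn_mul_quarterTurn {a b : R} (h : a * b = -1) :
    quarterTurn a * quarterTurn b = 1 := by
  simp [quarterTurn, Matrix.one_fin_three, h]

theorem quarterTurn_mulVec (c : R) (v : Fin 3 → R) :
    quarterTurn c *ᵥ v = ![-c * v 1, c * v 0, v 2] := by
  ext i; fin_cases i <;> simp [quarterTurn, Matrix.mulVec, dotProduct, Fin.sum_univ_three]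

def quarterTurnGL (c : Rˣ) : GL (Fin 3) R where
  val := quarterTurn (c : R)
  inv := quarterTurn (-c⁻¹ : Rˣ)
  val_inv := quarterTurn_mul_quarterTurn (by simp)
  inv_val := quarterTurn_mul_quarterTurn (by simp)

end QuarterTurn

open Complex in
theorem phiDBar_eq_conj_quarterTurnGL {d : ℕ} (hodd : Odd d) (c : ℂˣ)
    (hc : (c : ℂ) ^ (d - 1) = -I) (v : Fin 3 → ℂ) :
    phiDBar d v = (↑(quarterTurnGL c)⁻¹ : Matrix (Fin 3) (Fin 3) ℂ) *ᵥ
      phiD d ((quarterTurnGL c : Matrix (Fin 3) (Fin 3) ℂ) *ᵥ v) := by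
  have hcd : (c : ℂ)⁻¹ * (c : ℂ) ^ d = -I := by
    rw [← Nat.sub_add_cancel hodd.pos, pow_succ', hc, inv_mul_cancel_left₀ c.ne_zero]
  change _ = quarterTurn _ *ᵥ phiD d (quarterTurn _ *ᵥ v)
  rw [quarterTurn_mulVec, quarterTurn_mulVec]
  ext i; fin_cases i <;>
    simp only [phiD, phiDBar, Fin.zero_eta, Fin.mk_one, Fin.reduceFinMk, cons_val_zero,
      cons_val_one, cons_val, Units.val_neg, Units.val_inv_eq_inv_val, neg_mul, neg_neg]
  · rw [show -(c * v 1) + c * v 0 = c * (v 0 - v 1) by ring, mul_pow]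
    linear_combination (-(v 0 - v 1) ^ d) * hcd
  · rw [show -(c * v 1) - c * v 0 = -(c * (v 0 + v 1)) by ring, hodd.neg_pow, mul_pow]
    linear_combination (-I * (v 0 + v 1) ^ d) * hcd + (v 0 + v 1) ^ d * I_mul_I

theorem odd_degree_field_of_moduli_Q (d : ℕ) (hd : 3 ≤ d) (hodd : Odd d) :
    ∃ F : Matrix.GeneralLinearGroup (Fin 3) ℂ,
      ∀ v : Fin 3 → ℂ, v ≠ 0 → ∃ c : ℂ, c ≠ 0 ∧
        phiDBar d v =
          c • ((↑(F⁻¹) : Matrix (Fin 3) (Fin 3) ℂ).mulVec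
            (phiD d ((F : Matrix (Fin 3) (Fin 3) ℂ).mulVec v))) := by
  obtain ⟨c, hc⟩ := IsAlgClosed.exists_pow_nat_eq (-Complex.I) (n := d - 1) (by omega)
  have hc0 : c ≠ 0 := ne_zero_pow (by omega) (hc ▸ neg_ne_zero.mpr Complex.I_ne_zero)
  refine ⟨quarterTurnGL (Units.mk0 c hc0), fun v _ ↦ ⟨1, one_ne_zero, ?_⟩⟩
  rw [one_smul]
  exact phiDBar_eq_conj_quarterTurnGL hodd _ hc v
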